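/- For all integers n ≥ m ≥ 2, the number of fuzzy topologies on an n-element set X with membership values in an m-element chain M having exactly m^n − m^(n−2) open sets is τ_F(n, m, m^n − m^(n−2)) = n(n−1). Equivalently, there are exactly n(n−1) non-discrete fuzzy topologies of maximal cardinality, each having m^n − m^(n−2) open sets. -/

import Mathlib

/-- A fuzzy topology on `Fin n` with membership values in the `m`-element chain `Fin m`:
a collection of fuzzy sets (functions `Fin n → Fin m`) containing the constant function
with the least value, the constant function with the greatest value, and closed under
pointwise (binary) supremum and infimum. -/
def IsFuzzyTopology {n m : ℕ} (hm : m ≠ 0) (τ : Finset (Fin n → Fin m)) : Prop :=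
  (fun _ => (⟨0, Nat.pos_of_ne_zero hm⟩ : Fin m)) ∈ τ ∧
  (fun _ => (⟨m - 1, by omega⟩ : Fin m)) ∈ τ ∧
  (∀ f ∈ τ, ∀ g ∈ τ, f ⊔ g ∈ τ) ∧
  (∀ f ∈ τ, ∀ g ∈ τ, f ⊓ g ∈ τ)

/-- `tauF n m k hm` is the number of fuzzy topologies on an `n`-element set with values in an
`m`-element chain having exactly `k` open sets. -/
noncomputable def tauF (n m k : ℕ) (hm : m ≠ 0) : ℕ :=
  Nat.card {τ : Finset (Fin n → Fin m) // IsFuzzyTopology hm τ ∧ τ.card = k}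

/-- `biTauF n m k hm` is the number of fuzzy bitopological spaces (unordered pairs of fuzzy
topologies, allowing equal ones) on an `n`-element set with values in an `m`-element chain in
which both topologies have exactly `k` open sets. -/
noncomputable def biTauF (n m k : ℕ) (hm : m ≠ 0) : ℕ :=
  Nat.card (Sym2 {τ : Finset (Fin n → Fin m) // IsFuzzyTopology hm τ ∧ τ.card = k})

/-!
A bounded sublattice `τ` of `α → β` is generated under joins by the points `update ⊥ i t`, so if
`τ` is proper it misses some point `u = update ⊥ i t`. The least member `g` of `τ` with `t ≤ g i`
then lies strictly above `u` at some coordinate `j`, and no `f ∈ τ` with `t ≤ f i` satisfies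
`f j ≤ u j`. For `j = i` this excludes all `|β| ^ (|α| - 1)` fuzzy sets with `f i = t`, more than
a topology of the given size may miss; for `j ≠ i` it excludes the `|β| ^ (|α| - 2)` fuzzy sets
with `f i = ⊤` and `f j = ⊥`, which are then exactly the non-open ones. Conversely the complement
of each such set is a fuzzy topology, and distinct pairs `i ≠ j` give distinct topologies.
-/

open Finset Function Fintype

namespace FuzzyTopology

section Counting

variable {α β : Type*} [Fintype α] [DecidableEq α] [Fintype β] [DecidableEq β]

lemma card_filter_apply_eq (i : α) (b : β) :
    #{f : α → β | f i = b} = card β ^ (card α - 1) := by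
  simpa using card_filter_piFinset_const_eq_of_mem (univ : Finset β) i (mem_univ b)

lemma card_filter_apply_eq_and_apply_eq {i j : α} (hij : i ≠ j) (a b : β) :
    #{f : α → β | f i = a ∧ f j = b} = card β ^ (card α - 2) := by
  have hj := card_filter_piFinset_eq_of_mem (update (fun _ => (univ : Finset β)) i {a}) j
    (a := b) (by simp [hij.symm])
  rw [piFinset_update_singleton_eq_filter_piFinset_eq _ i (mem_univ a), filter_filter,
    piFinset_univ] at hj
  rw [hj, ← comp_def card, comp_update, prod_update_of_mem (by simpa using hij)]
  simp only [card_singleton, one_mul, comp_apply, card_univ]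
  rw [prod_const, card_sdiff_of_subset (by simpa using hij), card_erase_of_mem (mem_univ _),
    card_univ, card_singleton, Nat.sub_sub]

end Counting

section Generation

variable {α β : Type*}

lemma mem_of_forall_update_bot_mem [Fintype α] [DecidableEq α] [SemilatticeSup β] [OrderBot β]
    {s : Set (α → β)} (hbot : ⊥ ∈ s) (hsup : SupClosed s) (h : ∀ i t, update ⊥ i t ∈ s)
    (f : α → β) : f ∈ s := by
  have hf : f = univ.sup fun i => update ⊥ i (f i) :=
    le_antisymm (fun x => by simpa using le_sup (f := fun i => update ⊥ i (f i)) (mem_univ x) x)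
      (Finset.sup_le fun i _ => update_le_iff.2 ⟨le_rfl, fun _ _ => bot_le⟩)
  rw [hf]
  exact sup_induction hbot (fun a ha b hb => hsup ha hb) fun i _ => h i (f i)

variable [Lattice β] [BoundedOrder β] {τ : Finset (α → β)}

lemma exists_isLeast_mem_le_apply (htop : ⊤ ∈ τ) (hinf : InfClosed (τ : Set (α → β))) (i : α)
    (t : β) : ∃ g, IsLeast {f | f ∈ τ ∧ t ≤ f i} g := by
  classical
  refine ⟨{f ∈ τ | t ≤ f i}.inf id, ⟨?_, ?_⟩,
    fun f hf => inf_le (f := id) (mem_filter.2 ⟨hf.1, hf.2⟩)⟩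
  · exact inf_induction htop (fun a ha b hb => hinf ha hb) fun f hf => (mem_filter.1 hf).1
  · rw [Finset.inf_apply]
    exact Finset.le_inf fun f hf => (mem_filter.1 hf).2

lemma exists_forall_lt_of_update_bot_notMem [DecidableEq α] (htop : ⊤ ∈ τ)
    (hinf : InfClosed (τ : Set (α → β))) {i : α} {t : β} (hu : update ⊥ i t ∉ τ) :
    ∃ j, ∀ f ∈ τ, t ≤ f i → update (⊥ : α → β) i t j < f j := by
  obtain ⟨g, ⟨hgτ, hgi⟩, hg⟩ := exists_isLeast_mem_le_apply htop hinf i t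
  have hug : update ⊥ i t < g :=
    lt_of_le_of_ne (update_le_iff.2 ⟨hgi, fun _ _ => bot_le⟩) fun h => hu (h ▸ hgτ)
  obtain ⟨j, hj⟩ := (Pi.lt_def.1 hug).2
  exact ⟨j, fun f hf hfi => hj.trans_le (hg ⟨hf, hfi⟩ j)⟩

end Generation

variable {α β : Type*} [Fintype α] [DecidableEq α] [LinearOrder β] [BoundedOrder β] [Fintype β]

def topBotAt (i j : α) : Finset (α → β) := {f | f i = ⊤ ∧ f j = ⊥}

lemma mem_topBotAt {i j : α} {f : α → β} : f ∈ topBotAt i j ↔ f i = ⊤ ∧ f j = ⊥ := by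
  simp [topBotAt]

lemma card_topBotAt {i j : α} (hij : i ≠ j) :
    #(topBotAt i j : Finset (α → β)) = card β ^ (card α - 2) :=
  card_filter_apply_eq_and_apply_eq hij ⊤ ⊥

lemma card_compl_topBotAt {i j : α} (hij : i ≠ j) :
    #(topBotAt i j : Finset (α → β))ᶜ = card β ^ card α - card β ^ (card α - 2) := by
  rw [card_compl, card_topBotAt hij, card_fun]

lemma isSublattice_compl_topBotAt (i j : α) :
    IsSublattice (((topBotAt i j)ᶜ : Finset (α → β)) : Set (α → β)) where
  supClosed f hf g hg := by
    simp only [coe_compl, Set.mem_compl_iff, mem_coe, mem_topBotAt, Pi.sup_apply, sup_eq_bot_iff,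
      not_and] at *
    intro hi hfj hgj
    rcases le_total (f i) (g i) with h | h
    · exact hg (by rwa [sup_of_le_right h] at hi) hgj
    · exact hf (by rwa [sup_of_le_left h] at hi) hfj
  infClosed f hf g hg := by
    simp only [coe_compl, Set.mem_compl_iff, mem_coe, mem_topBotAt, Pi.inf_apply, inf_eq_top_iff,
      not_and] at *
    rintro ⟨hfi, hgi⟩ hj
    rcases le_total (f j) (g j) with h | h
    · exact hf hfi (by rwa [inf_of_le_left h] at hj)
    · exact hg hgi (by rwa [inf_of_le_right h] at hj)

variable [Nontrivial β]

lemma bot_mem_compl_topBotAt (i j : α) : ⊥ ∈ (topBotAt i j : Finset (α → β))ᶜ := by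
  simp [mem_topBotAt]

lemma top_mem_compl_topBotAt (i j : α) : ⊤ ∈ (topBotAt i j : Finset (α → β))ᶜ := by
  simp [mem_topBotAt]

lemma topBotAt_inj {i j i' j' : α} (hij : i ≠ j) :
    (topBotAt i j : Finset (α → β)) = topBotAt i' j' ↔ i = i' ∧ j = j' := by
  refine ⟨fun h => ?_, by rintro ⟨rfl, rfl⟩; rfl⟩
  have hi : update (⊥ : α → β) i ⊤ ∈ topBotAt i' j' := by
    simp [← h, mem_topBotAt, hij.symm]
  have hj : update (⊤ : α → β) j ⊥ ∈ topBotAt i' j' := by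
    simp [← h, mem_topBotAt, hij]
  rw [mem_topBotAt] at hi hj
  constructor
  · by_contra hne
    simp [update_of_ne (Ne.symm hne)] at hi
  · by_contra hne
    simp [update_of_ne (Ne.symm hne)] at hj

lemma exists_eq_compl_topBotAt (hα : 2 ≤ card α) {τ : Finset (α → β)} (hbot : ⊥ ∈ τ)
    (htop : ⊤ ∈ τ) (hτ : IsSublattice (τ : Set (α → β)))
    (hcard : #τ = card β ^ card α - card β ^ (card α - 2)) :
    ∃ i j, i ≠ j ∧ τ = (topBotAt i j)ᶜ := by
  have hβ : 1 < card β := one_lt_card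
  have hcompl : #τᶜ = card β ^ (card α - 2) := by
    have := Nat.pow_le_pow_right hβ.le (Nat.sub_le (card α) 2)
    rw [card_compl, card_fun, hcard]
    omega
  obtain ⟨i, t, hu⟩ : ∃ i t, update ⊥ i t ∉ τ := by
    by_contra! h
    have hempty : τᶜ = ∅ := by
      ext f
      simpa using mem_of_forall_update_bot_mem (s := τ) hbot hτ.supClosed h f
    rw [hempty, Finset.card_empty] at hcompl
    exact (pow_pos (by omega) _).ne hcompl
  obtain ⟨j, hj⟩ := exists_forall_lt_of_update_bot_notMem htop hτ.infClosed hu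
  rcases eq_or_ne i j with rfl | hij
  · have hsub : ({f | f i = t} : Finset (α → β)) ⊆ τᶜ := fun f hf => by
      rw [mem_filter] at hf
      exact mem_compl.2 fun hfτ => (hj f hfτ hf.2.ge).ne (by simp [hf.2])
    have := card_le_card hsub
    rw [card_filter_apply_eq, hcompl] at this
    exact absurd this (not_le.2 (Nat.pow_lt_pow_right hβ (by omega)))
  · refine ⟨i, j, hij, ?_⟩
    have hsub : topBotAt i j ⊆ τᶜ := fun f hf => by
      rw [mem_topBotAt] at hf
      exact mem_compl.2 fun hfτ => by
        simpa [update_of_ne hij.symm, hf.2] using hj f hfτ (hf.1 ▸ le_top)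
    rw [← compl_compl τ, ← eq_of_subset_of_card_le hsub (by rw [hcompl, card_topBotAt hij])]

theorem natCard_maximal_nondiscrete (hα : 2 ≤ card α) :
    Nat.card {τ : Finset (α → β) // ⊥ ∈ τ ∧ ⊤ ∈ τ ∧ IsSublattice (τ : Set (α → β)) ∧
      #τ = card β ^ card α - card β ^ (card α - 2)} = card α * (card α - 1) := by
  let compl_topBotAt (p : α × α) : Finset (α → β) := (topBotAt p.1 p.2)ᶜ
  have hmem : ∀ τ : Finset (α → β), (⊥ ∈ τ ∧ ⊤ ∈ τ ∧ IsSublattice (τ : Set (α → β)) ∧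
      #τ = card β ^ card α - card β ^ (card α - 2)) ↔ τ ∈ univ.offDiag.image compl_topBotAt := by
    intro τ
    simp only [mem_image, mem_offDiag, mem_univ, true_and, Prod.exists]
    constructor
    · rintro ⟨hbot, htop, hτ, hcard⟩
      obtain ⟨i, j, hij, rfl⟩ := exists_eq_compl_topBotAt hα hbot htop hτ hcard
      exact ⟨i, j, hij, rfl⟩
    · rintro ⟨i, j, hij, rfl⟩
      exact ⟨bot_mem_compl_topBotAt i j, top_mem_compl_topBotAt i j,
        isSublattice_compl_topBotAt i j, card_compl_topBotAt hij⟩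
  have hinj : Set.InjOn compl_topBotAt (univ.offDiag : Finset (α × α)) := by
    rintro ⟨i, j⟩ hij ⟨i', j'⟩ - h
    rw [mem_coe, mem_offDiag] at hij
    obtain ⟨rfl, rfl⟩ := (topBotAt_inj hij.2.2).1 (compl_inj_iff.1 h)
    rfl
  rw [Nat.card_congr (Equiv.subtypeEquivRight hmem), Nat.card_eq_fintype_card, Fintype.card_coe,
    card_image_of_injOn hinj, offDiag_card, card_univ, Nat.mul_sub_one]

end FuzzyTopology

lemma isFuzzyTopology_iff {n m : ℕ} [NeZero m] (hm : m ≠ 0) (τ : Finset (Fin n → Fin m)) :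
    IsFuzzyTopology hm τ ↔ ⊥ ∈ τ ∧ ⊤ ∈ τ ∧ IsSublattice (τ : Set (Fin n → Fin m)) := by
  have hbot : (fun _ => (⟨0, Nat.pos_of_ne_zero hm⟩ : Fin m)) = (⊥ : Fin n → Fin m) := by
    funext; rfl
  have htop : (fun _ => (⟨m - 1, by omega⟩ : Fin m)) = (⊤ : Fin n → Fin m) := by
    funext; rfl
  rw [IsFuzzyTopology, hbot, htop]
  refine and_congr_right' <| and_congr_right' ⟨fun ⟨hsup, hinf⟩ => ⟨?_, ?_⟩, fun h => ⟨?_, ?_⟩⟩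
  exacts [fun f hf g hg => hsup f hf g hg, fun f hf g hg => hinf f hf g hg,
    fun f hf g hg => h.supClosed hf hg, fun f hf g hg => h.infClosed hf hg]

theorem tauF_maximal_nondiscrete (n m : ℕ) (hm : 2 ≤ m) (hnm : m ≤ n) :
    tauF n m (m ^ n - m ^ (n - 2)) (by omega) = n * (n - 1) := by
  have : NeZero m := ⟨by omega⟩
  have : Nontrivial (Fin m) := Fin.nontrivial_iff_two_le.2 hm
  have hcount := FuzzyTopology.natCard_maximal_nondiscrete (α := Fin n) (β := Fin m)
    (by simpa using hm.trans hnm)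
  simp only [Fintype.card_fin] at hcount
  rw [tauF, ← hcount]
  exact Nat.card_congr <| Equiv.subtypeEquivRight fun τ => by
    rw [isFuzzyTopology_iff, and_assoc, and_assoc]
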